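/- Let (V, dist) be a finite metric space, T ⊆ V nonempty, and w : V × V → ℝ≥0 a symmetric weight function with w(v,v) = 0. Write A*_u = dist(u,T) = min_{t∈T} dist(u,t). Let α ≥ 0 and let g be a random map V → T such that almost surely g(t) = t for all t ∈ T and dist(u, g(u)) ≤ 2·A*_u for all u ∈ V, and such that Pr[g(u) ≠ g(v)] · (A*_u + A*_v) ≤ α · dist(u,v) for all u,v ∈ V. Define the altered cost of an unordered pair {u,v} under g as D_g(u,v) = dist(u,v) if g(u) = g(v), and D_g(u,v) = dist(u, g(u)) + dist(g(u), g(v)) + dist(g(v), v) otherwise. Then E[ ∑_{{u,v}} w(u,v) · D_g(u,v) ] ≤ (4α + 1) · ∑_{{u,v}} w(u,v) · dist(u,v). -/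

import Mathlib

open scoped BigOperators

/-- `dist` is a metric on `V`. -/
def IsMetric {V : Type*} (dist : V → V → ℝ) : Prop :=
  (∀ x, dist x x = 0) ∧ (∀ x y, 0 ≤ dist x y) ∧ (∀ x y, dist x y = dist y x) ∧
  (∀ x y z, dist x z ≤ dist x y + dist y z) ∧ (∀ x y, dist x y = 0 → x = y)

/-!
Fix a pair `u, v`. When `g` separates them, the triangle inequality through `u` and `v` bounds
the detour `dist u (g u) + dist (g u) (g v) + dist (g v) v` by
`dist u v + 2 (dist u (g u) + dist v (g v)) ≤ dist u v + 4 (A*_u + A*_v)`, so the expected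
altered cost of the pair is at most `dist u v + 4 Pr[g u ≠ g v] (A*_u + A*_v)`, which the
separation guarantee bounds by `(4α + 1) dist u v`. Summing with the nonnegative weights gives
the theorem.
-/

section Detour

variable {V : Type*} {dist : V → V → ℝ}

theorem detour_le (hsym : ∀ x y, dist x y = dist y x)
    (htri : ∀ x y z, dist x z ≤ dist x y + dist y z) (u v a b : V) :
    dist u a + dist a b + dist b v ≤ dist u v + 2 * (dist u a + dist v b) := by
  have hab : dist a b ≤ dist a u + dist u v + dist v b := by
    linarith [htri a u b, htri u v b]
  linarith [hsym a u, hsym b v]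

variable [DecidableEq V] {T : Finset V}

variable (dist) in
def alteredCost (g : V → {x // x ∈ T}) (u v : V) : ℝ :=
  if g u = g v then dist u v
  else dist u (g u) + dist (g u : V) (g v : V) + dist (g v : V) v

theorem alteredCost_le (hsym : ∀ x y, dist x y = dist y x)
    (htri : ∀ x y z, dist x z ≤ dist x y + dist y z) (g : V → {x // x ∈ T}) {u v : V}
    {a b : ℝ} (hu : dist u (g u) ≤ 2 * a) (hv : dist v (g v) ≤ 2 * b) :
    alteredCost dist g u v ≤ dist u v + if g u = g v then 0 else 4 * (a + b) := by
  unfold alteredCost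
  split_ifs
  · simp
  · linarith [detour_le hsym htri u v (g u) (g v)]

end Detour

section Expectation

variable {Ω : Type*} [Fintype Ω] (p : Ω → ℝ)

theorem sum_mul_add_ite_eq (P : Ω → Prop) [DecidablePred P] (c d : ℝ) :
    ∑ ω, p ω * (c + if P ω then 0 else d) =
      c * ∑ ω, p ω + (∑ ω ∈ Finset.univ.filter (fun ω => ¬ P ω), p ω) * d := by
  rw [Finset.sum_filter, Finset.mul_sum, Finset.sum_mul, ← Finset.sum_add_distrib]
  refine Finset.sum_congr rfl fun ω _ => ?_
  split_ifs <;> ring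

theorem expectation_weighted_sum_le {ι : Type*} [Fintype ι]
    (w : ι → ι → ℝ) (hw : ∀ i j, 0 ≤ w i j) (X : Ω → ι → ι → ℝ) (d : ι → ι → ℝ) (c : ℝ)
    (hX : ∀ i j, ∑ ω, p ω * X ω i j ≤ c * d i j) :
    ∑ ω, p ω * ∑ i, ∑ j, w i j * X ω i j ≤ c * ∑ i, ∑ j, w i j * d i j := by
  have hswap : ∑ ω, p ω * ∑ i, ∑ j, w i j * X ω i j =
      ∑ i, ∑ j, w i j * ∑ ω, p ω * X ω i j := by
    simp_rw [Finset.mul_sum]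
    rw [Finset.sum_comm]
    refine Finset.sum_congr rfl fun i _ => ?_
    rw [Finset.sum_comm]
    exact Finset.sum_congr rfl fun j _ => Finset.sum_congr rfl fun ω _ => by ring
  rw [hswap, Finset.mul_sum]
  refine Finset.sum_le_sum fun i _ => ?_
  rw [Finset.mul_sum]
  refine Finset.sum_le_sum fun j _ => ?_
  calc w i j * ∑ ω, p ω * X ω i j ≤ w i j * (c * d i j) :=
        mul_le_mul_of_nonneg_left (hX i j) (hw i j)
    _ = c * (w i j * d i j) := by ring

end Expectation

theorem expected_alteredCost_le {V : Type*} [Fintype V] [DecidableEq V]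
    {dist : V → V → ℝ} (hsym : ∀ x y, dist x y = dist y x)
    (htri : ∀ x y z, dist x z ≤ dist x y + dist y z) {T : Finset V} (A : V → ℝ) {α : ℝ}
    {p : (V → {x // x ∈ T}) → ℝ} (hp : ∀ g, 0 ≤ p g) (hp1 : ∑ g, p g = 1)
    (hclose : ∀ g, p g ≠ 0 → ∀ u : V, dist u (g u) ≤ 2 * A u) (u v : V)
    (hsep : (∑ g ∈ Finset.univ.filter (fun g : V → {x // x ∈ T} => g u ≠ g v), p g) *
      (A u + A v) ≤ α * dist u v) :
    ∑ g, p g * alteredCost dist g u v ≤ (4 * α + 1) * dist u v := by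
  calc ∑ g, p g * alteredCost dist g u v
      ≤ ∑ g, p g * (dist u v + if g u = g v then 0 else 4 * (A u + A v)) := by
        refine Finset.sum_le_sum fun g _ => ?_
        by_cases hpg : p g = 0
        · simp [hpg]
        exact mul_le_mul_of_nonneg_left
          (alteredCost_le hsym htri g (hclose g hpg u) (hclose g hpg v)) (hp g)
    _ = dist u v + (∑ g ∈ Finset.univ.filter (fun g : V → {x // x ∈ T} => g u ≠ g v), p g) *
          (4 * (A u + A v)) := by
        rw [sum_mul_add_ite_eq, hp1, mul_one]
    _ ≤ (4 * α + 1) * dist u v := by linarith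

theorem altered_instance_cost
    (V : Type) [Fintype V] [DecidableEq V]
    (dist : V → V → ℝ) (T : Finset V) (hT : T.Nonempty)
    (w : V → V → ℝ)
    (hwnn : ∀ u v, 0 ≤ w u v)
    (hmet : IsMetric dist)
    (α : ℝ)
    (p : (V → {x // x ∈ T}) → ℝ)
    (hp : ∀ g, 0 ≤ p g) (hp1 : ∑ g, p g = 1)
    (hclose : ∀ g, p g ≠ 0 → ∀ u : V,
      dist u (g u) ≤ 2 * T.inf' hT (fun t => dist u t))
    (hsep : ∀ u v : V,
      (∑ g ∈ Finset.univ.filter (fun g : V → {x // x ∈ T} => g u ≠ g v), p g) *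
          (T.inf' hT (fun t => dist u t) + T.inf' hT (fun t => dist v t)) ≤
        α * dist u v) :
    ∑ g : V → {x // x ∈ T}, p g *
        ((∑ u, ∑ v, w u v *
          (if g u = g v then dist u v
           else dist u (g u) + dist (g u : V) (g v : V) + dist (g v : V) v)) / 2) ≤
      (4 * α + 1) * ((∑ u, ∑ v, w u v * dist u v) / 2) := by
  obtain ⟨-, -, hsym, htri, -⟩ := hmet
  have hsum := expectation_weighted_sum_le p w hwnn (alteredCost dist) dist (4 * α + 1)
    fun u v => expected_alteredCost_le hsym htri (fun u => T.inf' hT (dist u)) hp hp1 hclose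
      u v (hsep u v)
  simp_rw [← mul_div_assoc, ← Finset.sum_div]
  exact div_le_div_of_nonneg_right hsum zero_le_two
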